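/- arXiv:1908.02922 — 2 statements merged into one kernel-verified Lean document; each statement's English description precedes it below -/
import Mathlib

section
/- Let (x_i, y_i), i = 1,…,n, with x_1 ≤ … ≤ x_n, and let m satisfy n − 2m ≥ 1. If Σ_{i=m+1}^{n−m} x_i ≠ 0, then the trimmed mean equation ε̄_{nλ}(θ) = 0 has at least one real root θ, where ε̄_{nλ}(θ) is the average of the middle n − 2m order statistics of the residuals ε_i(θ) = y_i − θ·x_i. -/
/-- The sorted list (in nondecreasing order) of residuals `y i - θ * x i`. -/
noncomputable def sortedResiduals (n : ℕ) (x y : Fin n → ℝ) (θ : ℝ) : List ℝ :=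
  Multiset.sort (Multiset.map (fun i => y i - θ * x i) Finset.univ.val) (· ≤ ·)

/-- The k-th smallest residual (0-indexed: `k = 0` is the smallest). -/
noncomputable def orderStat (n : ℕ) (x y : Fin n → ℝ) (k : ℕ) (θ : ℝ) : ℝ :=
  (sortedResiduals n x y θ).getD k 0

/-!
Write `S` for the sum of the middle `n - 2m` values of `x`. The `k`-th order statistic of a
vector is monotone in the vector and commutes with adding constants, so it is 1-Lipschitz for
the sup norm; hence the trimmed sum of the residuals is continuous in `θ`. Since `x` is sorted,
`θ • x` is sorted up to reversal, and the trimmed sum of `-θ • x` is exactly `-θ S`. The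
residual vector differs from `-θ • x` by `y`, so the trimmed sum of the residuals is
`-θ S + O(‖y‖)`.
As `S ≠ 0` it changes sign, and the intermediate value theorem gives a root.
-/

namespace List.Pairwise

variable {α : Type*} [LinearOrder α] {l : List α}

theorem succ_le_length_filter_le_getElem (hl : l.Pairwise (· ≤ ·)) {k : ℕ}
    (hk : k < l.length) : k + 1 ≤ (l.filter (· ≤ l[k])).length := by
  have htake : (l.take (k + 1)).filter (· ≤ l[k]) = l.take (k + 1) := by
    refine List.filter_eq_self.2 fun a ha => ?_
    obtain ⟨i, hi, rfl⟩ := List.getElem_of_mem ha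
    rw [List.length_take] at hi
    rw [List.getElem_take, decide_eq_true_eq]
    rcases (Nat.lt_succ_iff.1 (lt_of_lt_of_le hi (min_le_left _ _))).lt_or_eq with h | rfl
    · exact List.pairwise_iff_getElem.1 hl _ _ _ _ h
    · exact le_rfl
  have hlen : (l.take (k + 1)).length = k + 1 := by simp only [List.length_take]; omega
  rw [← hlen, ← htake]
  exact ((List.take_sublist _ _).filter _).length_le

theorem length_filter_lt_getElem_le (hl : l.Pairwise (· ≤ ·)) {k : ℕ}
    (hk : k < l.length) : (l.filter (· < l[k])).length ≤ k := by
  generalize ht : l[k] = t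
  have hdrop : (l.drop k).filter (· < t) = [] := by
    refine List.filter_eq_nil_iff.2 fun a ha => ?_
    obtain ⟨i, hi, rfl⟩ := List.getElem_of_mem ha
    rw [List.getElem_drop, decide_eq_true_eq, not_lt, ← ht]
    rcases Nat.eq_zero_or_pos i with rfl | h
    · simp
    · exact List.pairwise_iff_getElem.1 hl _ _ _ _ (by omega)
  calc (l.filter (· < t)).length
      = ((l.take k).filter (· < t)).length := by
        conv_lhs => rw [← List.take_append_drop k l]
        rw [List.filter_append, hdrop, List.append_nil]
    _ ≤ (l.take k).length := List.length_filter_le _ _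
    _ ≤ k := by simp

end List.Pairwise

open Finset

noncomputable def orderStatistic {n : ℕ} (v : Fin n → ℝ) (k : ℕ) : ℝ :=
  (Multiset.sort (Multiset.map v univ.val) (· ≤ ·)).getD k 0

noncomputable def trimmedSum {n : ℕ} (m : ℕ) (v : Fin n → ℝ) : ℝ :=
  ∑ k ∈ Ico m (n - m), orderStatistic v k

section OrderStatistic

variable {n : ℕ} {k : ℕ}

theorem card_filter_eq_length_filter_sort (v : Fin n → ℝ) (p : ℝ → Prop) [DecidablePred p] :
    #{i | p (v i)} =
      ((Multiset.sort (Multiset.map v univ.val) (· ≤ ·)).filter (p ·)).length := by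
  rw [← Multiset.coe_card, ← Multiset.filter_coe, Multiset.sort_eq,
    ← Multiset.countP_eq_card_filter, Multiset.countP_map]
  rfl

theorem orderStatistic_eq_getElem (v : Fin n → ℝ) (hk : k < n) :
    orderStatistic v k = (Multiset.sort (Multiset.map v univ.val) (· ≤ ·))[k]'(by simpa) :=
  List.getD_eq_getElem _ _ _

theorem succ_le_card_filter_le_orderStatistic (v : Fin n → ℝ) (hk : k < n) :
    k + 1 ≤ #{i | v i ≤ orderStatistic v k} := by
  rw [card_filter_eq_length_filter_sort v (· ≤ _), orderStatistic_eq_getElem v hk]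
  exact (Multiset.pairwise_sort _ _).succ_le_length_filter_le_getElem _

theorem card_filter_lt_orderStatistic_le (v : Fin n → ℝ) (hk : k < n) :
    #{i | v i < orderStatistic v k} ≤ k := by
  rw [card_filter_eq_length_filter_sort v (· < _), orderStatistic_eq_getElem v hk]
  exact (Multiset.pairwise_sort _ _).length_filter_lt_getElem_le _

theorem orderStatistic_le_of_succ_le_card (v : Fin n → ℝ) (hk : k < n) {b : ℝ}
    (h : k + 1 ≤ #{i | v i ≤ b}) : orderStatistic v k ≤ b := by
  by_contra! hb
  have : #{i | v i ≤ b} ≤ #{i | v i < orderStatistic v k} :=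
    card_le_card fun i => by simpa using fun hi => hi.trans_lt hb
  have := card_filter_lt_orderStatistic_le v hk
  omega

theorem orderStatistic_mono {v w : Fin n → ℝ} (hk : k < n) (hvw : v ≤ w) :
    orderStatistic v k ≤ orderStatistic w k := by
  refine orderStatistic_le_of_succ_le_card v hk
    ((succ_le_card_filter_le_orderStatistic w hk).trans ?_)
  exact card_le_card fun i => by simpa using (hvw i).trans

theorem orderStatistic_add_const_le (v : Fin n → ℝ) (hk : k < n) (c : ℝ) :
    orderStatistic (fun i => v i + c) k ≤ orderStatistic v k + c := by
  refine orderStatistic_le_of_succ_le_card _ hk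
    ((succ_le_card_filter_le_orderStatistic v hk).trans ?_)
  exact card_le_card fun i => by simp

theorem orderStatistic_add_const (v : Fin n → ℝ) (hk : k < n) (c : ℝ) :
    orderStatistic (fun i => v i + c) k = orderStatistic v k + c := by
  refine le_antisymm (orderStatistic_add_const_le v hk c) ?_
  have := orderStatistic_add_const_le (fun i => v i + c) hk (-c)
  simp only [add_neg_cancel_right] at this
  linarith

theorem dist_orderStatistic_le (v w : Fin n → ℝ) (hk : k < n) :
    dist (orderStatistic v k) (orderStatistic w k) ≤ dist v w := by
  have hle : ∀ v w : Fin n → ℝ, orderStatistic v k ≤ orderStatistic w k + dist v w := by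
    intro v w
    rw [← orderStatistic_add_const w hk]
    refine orderStatistic_mono hk fun i => ?_
    have := (le_abs_self _).trans ((Real.dist_eq _ _).symm.trans_le (dist_le_pi_dist v w i))
    linarith
  rw [Real.dist_eq, abs_sub_le_iff]
  constructor <;> linarith [hle v w, hle w v, dist_comm v w]

theorem orderStatistic_of_monotone {v : Fin n → ℝ} (hv : Monotone v) (hk : k < n) :
    orderStatistic v k = v ⟨k, hk⟩ := by
  rw [orderStatistic, Fin.univ_val_map, Multiset.coe_sort,
    List.mergeSort_eq_self (r := fun a b : ℝ => a ≤ b)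
      (List.pairwise_ofFn.2 fun i j h => hv h.le),
    List.getD_eq_getElem _ _ (by simpa), List.getElem_ofFn]

theorem orderStatistic_comp_rev (v : Fin n → ℝ) :
    orderStatistic (v ∘ Fin.rev) = orderStatistic v := by
  ext k
  have hrev : Multiset.map (Fin.rev (n := n)) univ.val = univ.val :=
    Multiset.map_univ_val_equiv Fin.revPerm
  rw [orderStatistic, orderStatistic, ← Multiset.map_map, hrev]

end OrderStatistic

section TrimmedSum

variable {n : ℕ} (m : ℕ)

theorem trimmedSum_of_monotone {v : Fin n → ℝ} (hv : Monotone v) :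
    trimmedSum m v =
      ∑ i ∈ univ.filter (fun i : Fin n => m ≤ (i : ℕ) ∧ (i : ℕ) < n - m), v i := by
  refine (sum_bij (fun (i : Fin n) _ => (i : ℕ)) (fun i hi => by simpa using hi)
    (fun i _ j _ h => Fin.ext h) (fun k hk => ?_) ?_).symm
  · simp only [mem_Ico] at hk
    exact ⟨⟨k, by omega⟩, by simpa using hk, rfl⟩
  · exact fun i _ => (orderStatistic_of_monotone hv i.2).symm

theorem sum_middle_comp_rev (v : Fin n → ℝ) :
    ∑ i ∈ univ.filter (fun i : Fin n => m ≤ (i : ℕ) ∧ (i : ℕ) < n - m), v (Fin.rev i) =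
      ∑ i ∈ univ.filter (fun i : Fin n => m ≤ (i : ℕ) ∧ (i : ℕ) < n - m), v i :=
  sum_equiv Fin.revPerm (fun i => by
      simp only [mem_filter, mem_univ, true_and, Fin.revPerm_apply, Fin.val_rev]; omega)
    (fun _ _ => rfl)

theorem trimmedSum_const_mul_of_monotone {x : Fin n → ℝ} (hx : Monotone x) (c : ℝ) :
    trimmedSum m (fun i => c * x i) =
      c * ∑ i ∈ univ.filter (fun i : Fin n => m ≤ (i : ℕ) ∧ (i : ℕ) < n - m), x i := by
  rw [mul_sum]
  rcases le_total 0 c with hc | hc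
  · exact trimmedSum_of_monotone m (hx.const_mul hc)
  · have hmono : Monotone ((fun i => c * x i) ∘ Fin.rev) :=
      (hx.const_mul_of_nonpos hc).comp Fin.rev_anti
    rw [trimmedSum, ← orderStatistic_comp_rev, ← trimmedSum, trimmedSum_of_monotone m hmono,
      Function.comp_def, sum_middle_comp_rev m (fun i => c * x i)]

theorem abs_trimmedSum_sub_le (v w : Fin n → ℝ) :
    |trimmedSum m v - trimmedSum m w| ≤ (n - m - m : ℕ) * dist v w := by
  have hcard : n - m - m = #(Ico m (n - m)) := (Nat.card_Ico _ _).symm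
  rw [trimmedSum, trimmedSum, ← sum_sub_distrib, hcard, ← nsmul_eq_mul]
  refine (abs_sum_le_sum_abs _ _).trans (sum_le_card_nsmul _ _ _ fun k hk => ?_)
  rw [← Real.dist_eq]
  exact dist_orderStatistic_le v w ((mem_Ico.1 hk).2.trans_le (Nat.sub_le n m))

theorem continuous_trimmedSum : Continuous (trimmedSum (n := n) m) :=
  continuous_finsetSum _ fun k hk =>
    (LipschitzWith.of_dist_le_mul (K := 1) fun v w => by
      simpa using
        dist_orderStatistic_le v w ((mem_Ico.1 hk).2.trans_le (Nat.sub_le n m))).continuous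

end TrimmedSum

theorem abs_trimmedSum_residual_add_le {n : ℕ} (m : ℕ) {x : Fin n → ℝ} (hx : Monotone x)
    (y : Fin n → ℝ) (θ : ℝ) :
    |trimmedSum m (fun i => y i - θ * x i) +
      θ * ∑ i ∈ univ.filter (fun i : Fin n => m ≤ (i : ℕ) ∧ (i : ℕ) < n - m), x i| ≤
      (n - m - m : ℕ) * ‖y‖ := by
  have h := abs_trimmedSum_sub_le m (fun i => y i - θ * x i) (fun i => -θ * x i)
  rwa [trimmedSum_const_mul_of_monotone m hx, dist_eq_norm, neg_mul, sub_neg_eq_add,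
    show ((fun i => y i - θ * x i) - fun i => -θ * x i) = y by ext; simp] at h

theorem exists_eq_zero_of_abs_add_mul_le {g : ℝ → ℝ} (hg : Continuous g) {s b : ℝ}
    (hs : s ≠ 0) (h : ∀ θ, |g θ + θ * s| ≤ b) : ∃ θ, g θ = 0 := by
  have hpos : g (-b / s) ≥ 0 := by
    have := (abs_le.1 (h (-b / s))).1
    rw [div_mul_cancel₀ _ hs] at this
    linarith
  have hneg : g (b / s) ≤ 0 := by
    have := (abs_le.1 (h (b / s))).2
    rw [div_mul_cancel₀ _ hs] at this
    linarith
  obtain ⟨θ, -, hθ⟩ :=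
    intermediate_value_uIcc hg.continuousOn (Set.mem_uIcc.2 (Or.inl ⟨hneg, hpos⟩))
  exact ⟨θ, hθ⟩

theorem stmt_7_general (n m : ℕ) (x y : Fin n → ℝ) (hx : Monotone x)
    (hsum : ∑ i ∈ Finset.univ.filter (fun i : Fin n => m ≤ (i : ℕ) ∧ (i : ℕ) < n - m), x i ≠ 0) :
    ∃ θ : ℝ, (1 / ((n : ℝ) - 2 * m)) * ∑ k ∈ Finset.Ico m (n - m), orderStat n x y k θ = 0 := by
  have hcont : Continuous fun θ => trimmedSum m (fun i => y i - θ * x i) :=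
    (continuous_trimmedSum m).comp (by fun_prop)
  obtain ⟨θ, hθ⟩ :=
    exists_eq_zero_of_abs_add_mul_le hcont hsum (abs_trimmedSum_residual_add_le m hx y)
  refine ⟨θ, ?_⟩
  change 1 / ((n : ℝ) - 2 * m) * trimmedSum m (fun i => y i - θ * x i) = 0
  rw [hθ, mul_zero]

theorem stmt_7 (n m : ℕ) (x y : Fin n → ℝ) (hx : Monotone x) (hm : 1 ≤ n - 2 * m)
    (hmn : 2 * m ≤ n)
    (hsum : ∑ i ∈ Finset.univ.filter (fun i : Fin n => m ≤ (i : ℕ) ∧ (i : ℕ) < n - m), x i ≠ 0) :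
    ∃ θ : ℝ, (1 / ((n : ℝ) - 2 * m)) * ∑ k ∈ Finset.Ico m (n - m), orderStat n x y k θ = 0 :=
  stmt_7_general n m x y hx hsum
end

section
/- Let f: ℝ → ℝ be defined by f(θ) = Σ_{i=m+1}^{n−m} ε_{(i)}(θ) where ε_{(i)}(θ) are the order statistics of ε_i(θ) = y_i − θ·x_i, with data sorted so x_1 ≤ … ≤ x_n and n − 2m ≥ 1. If all x_i > 0, then f is strictly decreasing in θ; consequently, the trimmed mean equation f(θ) = 0 has at most one root. -/
namespace List

variable {α : Type*} [LinearOrder α] {L : List α} {k : ℕ}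

theorem countP_lt_getElem_le (hL : L.Pairwise (· ≤ ·)) (hk : k < L.length) :
    L.countP (· < L[k]) ≤ k := by
  have hdrop : (L.drop k).countP (· < L[k]) = 0 := by
    rw [countP_eq_zero]
    intro a ha
    obtain ⟨j, hj, rfl⟩ := mem_iff_getElem.mp ha
    rw [length_drop] at hj
    simpa using hL.rel_get_of_le (a := ⟨k, hk⟩) (b := ⟨k + j, by omega⟩) (by simp)
  calc L.countP (· < L[k])
      = (L.take k).countP (· < L[k]) + (L.drop k).countP (· < L[k]) := by
        rw [← countP_append, take_append_drop]
    _ ≤ k := by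
        rw [hdrop, add_zero]
        exact countP_le_length.trans (length_take_le k L)

theorem lt_countP_le_getElem (hL : L.Pairwise (· ≤ ·)) (hk : k < L.length) :
    k < L.countP (· ≤ L[k]) := by
  have htake : (L.take (k + 1)).countP (· ≤ L[k]) = k + 1 := by
    rw [countP_eq_length.mpr, length_take_of_le hk]
    intro a ha
    obtain ⟨j, hj, rfl⟩ := mem_iff_getElem.mp ha
    rw [length_take_of_le hk] at hj
    simpa using hL.rel_get_of_le (a := ⟨j, by omega⟩) (b := ⟨k, hk⟩) (by simp; omega)
  have := (take_sublist (k + 1) L).countP_le (p := (· ≤ L[k]))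
  omega

end List

namespace Multiset

variable {ι α : Type*} [LinearOrder α]

theorem getElem_sort_map_lt (s : Multiset ι) {f g : ι → α} (hfg : ∀ i ∈ s, f i < g i) {k : ℕ}
    (hf : k < (sort (s.map f)).length) (hg : k < (sort (s.map g)).length) :
    (sort (s.map f))[k] < (sort (s.map g))[k] := by
  by_contra! hle
  have hcount : ∀ c d : α, d ≤ c → (s.map g).countP (· ≤ d) ≤ (s.map f).countP (· < c) := by
    intro c d hdc
    obtain ⟨l, rfl⟩ := Quot.exists_rep s
    simp only [quot_mk_to_coe'', map_coe, coe_countP, List.countP_map]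
    refine List.countP_mono_left fun i hi hgi => ?_
    simp only [Function.comp, decide_eq_true_eq] at hgi ⊢
    exact (hfg i hi).trans_le (hgi.trans hdc)
  have hf' := List.countP_lt_getElem_le (pairwise_sort (s.map f) (· ≤ ·)) hf
  have hg' := List.lt_countP_le_getElem (pairwise_sort (s.map g) (· ≤ ·)) hg
  rw [← coe_countP, sort_eq] at hf' hg'
  have := hcount _ _ hle
  omega

end Multiset

theorem length_sortedResiduals (n : ℕ) (x y : Fin n → ℝ) (θ : ℝ) :
    (sortedResiduals n x y θ).length = n := by
  simp [sortedResiduals]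

theorem orderStat_strictAnti {n : ℕ} {x : Fin n → ℝ} (y : Fin n → ℝ) (hpos : ∀ i, 0 < x i)
    {k : ℕ} (hk : k < n) : StrictAnti (orderStat n x y k) := by
  intro a b hab
  have hka := (length_sortedResiduals n x y a).symm ▸ hk
  have hkb := (length_sortedResiduals n x y b).symm ▸ hk
  rw [orderStat, orderStat, List.getD_eq_getElem _ _ hka, List.getD_eq_getElem _ _ hkb]
  exact Multiset.getElem_sort_map_lt _
    (fun i _ => by linarith [mul_lt_mul_of_pos_right hab (hpos i)]) hkb hka

theorem stmt_12_general (n m : ℕ) (x y : Fin n → ℝ) (hm : 1 ≤ n - 2 * m)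
    (hpos : ∀ i, 0 < x i) :
    StrictAnti (fun θ : ℝ => ∑ k ∈ Finset.Ico m (n - m), orderStat n x y k θ) ∧
      ∀ a b : ℝ, (∑ k ∈ Finset.Ico m (n - m), orderStat n x y k a) = 0 →
        (∑ k ∈ Finset.Ico m (n - m), orderStat n x y k b) = 0 → a = b := by
  have hne : (Finset.Ico m (n - m)).Nonempty := Finset.nonempty_Ico.mpr (by omega)
  have hanti : StrictAnti (fun θ : ℝ => ∑ k ∈ Finset.Ico m (n - m), orderStat n x y k θ) :=
    fun a b hab => Finset.sum_lt_sum_of_nonempty hne fun k hk =>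
      orderStat_strictAnti y hpos (by grind) hab
  exact ⟨hanti, fun a b ha hb => hanti.injective (ha.trans hb.symm)⟩

theorem stmt_12 (n m : ℕ) (x y : Fin n → ℝ) (hx : Monotone x) (hm : 1 ≤ n - 2 * m)
    (hmn : 2 * m ≤ n) (hpos : ∀ i, 0 < x i) :
    StrictAnti (fun θ : ℝ => ∑ k ∈ Finset.Ico m (n - m), orderStat n x y k θ) ∧
      ∀ a b : ℝ, (∑ k ∈ Finset.Ico m (n - m), orderStat n x y k a) = 0 →
        (∑ k ∈ Finset.Ico m (n - m), orderStat n x y k b) = 0 → a = b :=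
  stmt_12_general n m x y hm hpos
end
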